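/- Let G and A be additive abelian groups, let f : G → A satisfy the cube relation, and let n ≥ 1 be a natural number. If x ∈ G satisfies 2ⁿ • f(x) = 0 and 2ⁿ • f(−x) = 0, then f(2^{n+1} • x) = 0. (This is the abstract core of Corollary 5.3 for ℓ = 2: for a 1-motive M satisfying the generalized Theorem of the Cube for the prime 2, the 2ⁿ-torsion of H²_ét(M, G_m) is contained in the kernel of the pullback (2^{n+1}_M)* along the multiplication-by-2^{n+1} map of the Picard stack M.) -/

import Mathlib

/-!
The cube relation says exactly that the polarization `polar f x y = f (x + y) - f x - f y` is
additive in `x`. Hence `f ((m + 1) • x) = f (m • x) + f x + m • polar f x x`, and additivity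
applied to `x + (-x) = 0` gives `polar f x x = f x + f (-x)`. Summing,
`f (m • x) = m • f x + (m choose 2) • (f x + f (-x))`, and for `m = 2 ^ (n + 1)` both
coefficients are multiples of `2 ^ n`.
-/

section

variable {G A : Type*} [AddCommGroup G] [AddCommGroup A]

def CubeRelation (f : G → A) : Prop :=
  ∀ x y z : G, f (x + y + z) - f (x + y) - f (x + z) - f (y + z) + f x + f y + f z = 0

def polar (f : G → A) (x y : G) : A := f (x + y) - f x - f y

namespace CubeRelation

variable {f : G → A}

theorem map_zero (hf : CubeRelation f) : f 0 = 0 := by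
  simpa using hf 0 0 0

theorem polar_add_left (hf : CubeRelation f) (x y z : G) :
    polar f (x + y) z = polar f x z + polar f y z := by
  rw [← sub_eq_zero, ← hf x y z]
  simp only [polar]
  abel

theorem polar_nsmul_left (hf : CubeRelation f) (m : ℕ) (x y : G) :
    polar f (m • x) y = m • polar f x y := by
  induction m with
  | zero => simp [polar, hf.map_zero]
  | succ m ih => rw [succ_nsmul, hf.polar_add_left, ih, succ_nsmul]

theorem polar_self (hf : CubeRelation f) (x : G) : polar f x x = f x + f (-x) := by
  have h := hf.polar_add_left x (-x) x
  simp only [add_neg_cancel, polar, zero_add, neg_add_cancel, hf.map_zero] at h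
  rw [polar, ← sub_eq_zero, ← neg_eq_zero, ← sub_eq_zero.mpr h]
  abel

theorem map_nsmul (hf : CubeRelation f) (m : ℕ) (x : G) :
    f (m • x) = m • f x + m.choose 2 • (f x + f (-x)) := by
  induction m with
  | zero => simp [hf.map_zero]
  | succ m ih =>
    have step : f ((m + 1) • x) = f (m • x) + f x + m • polar f x x := by
      rw [← hf.polar_nsmul_left, polar, succ_nsmul]
      abel
    rw [step, ih, hf.polar_self, Nat.choose_succ_succ', Nat.choose_one_right]
    simp only [add_smul, one_smul]
    abel

end CubeRelation

end

theorem Nat.two_mul_choose_two (k : ℕ) : (2 * k).choose 2 = (2 * k - 1) * k := by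
  rw [Nat.choose_two_right, Nat.mul_assoc, Nat.mul_div_cancel_left _ two_pos, Nat.mul_comm]

theorem cube_relation_two_torsion_general {G A : Type*} [AddCommGroup G] [AddCommGroup A]
    (f : G → A)
    (hf : ∀ x y z : G,
      f (x + y + z) - f (x + y) - f (x + z) - f (y + z) + f x + f y + f z = 0)
    (n : ℕ) (x : G)
    (hx : 2 ^ n • f x = 0) (hx' : 2 ^ n • f (-x) = 0) :
    f (2 ^ (n + 1) • x) = 0 := by
  have hsum : 2 ^ n • (f x + f (-x)) = 0 := by rw [smul_add, hx, hx', add_zero]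
  rw [CubeRelation.map_nsmul hf, pow_succ', Nat.two_mul_choose_two, mul_smul,
    mul_smul, hx, hsum, smul_zero, smul_zero, add_zero]

/-- If `f : G → A` satisfies the cube relation, `n ≥ 1`, and
`2ⁿ • f x = 0` and `2ⁿ • f (-x) = 0`, then `f (2^(n+1) • x) = 0`. -/
theorem cube_relation_two_torsion {G A : Type*} [AddCommGroup G] [AddCommGroup A]
    (f : G → A)
    (hf : ∀ x y z : G,
      f (x + y + z) - f (x + y) - f (x + z) - f (y + z) + f x + f y + f z = 0)
    (n : ℕ) (hn : 1 ≤ n) (x : G)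
    (hx : 2 ^ n • f x = 0) (hx' : 2 ^ n • f (-x) = 0) :
    f (2 ^ (n + 1) • x) = 0 :=
  cube_relation_two_torsion_general f hf n x hx hx'
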